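/- arXiv:math/0501289 — 3 statements merged into one kernel-verified Lean document; each statement's English description precedes it below -/
import Mathlib

section
/- Let κ > 0 and r ∈ (0,1), let μ_n = (κ r log n)^{1/κ}, and define Φ̄(a) = ∫_a^{∞} exp(−x^κ/κ) dx. Then for every fixed c ∈ ℝ, log Φ̄(μ_n + c) / log n → −r as n → ∞. In particular, under the shift-location model with generalized Gaussian (Subbotin) null distribution and shift μ_n, every fixed quantile G^{−1}(q) of the p-value distribution under the alternative satisfies log G^{−1}(q) ∼ −r log n. -/
open Filter Set MeasureTheory Real

-- integrability
lemma subbotin_integrableOn {κ b : ℝ} (hκ : 0 < κ) (hb : 0 < b) :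
    IntegrableOn (fun x : ℝ => Real.exp (-b * x ^ κ)) (Set.Ioi (0:ℝ)) := by
  have hp : (1:ℝ)/κ ≠ 0 := by positivity
  rw [← integrableOn_Ioi_comp_rpow_iff' (fun x : ℝ => Real.exp (-b * x ^ κ)) hp]
  have h0 : IntegrableOn (fun u : ℝ => u ^ ((1:ℝ)/κ - 1) * Real.exp (-b * u ^ (1:ℝ)))
      (Ioi (0:ℝ)) :=
    integrableOn_rpow_mul_exp_neg_mul_rpow (by simp; positivity) one_pos hb
  refine h0.congr_fun (fun x hx => ?_) measurableSet_Ioi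
  have hx0 : (0:ℝ) < x := hx
  rw [smul_eq_mul, ← Real.rpow_mul hx0.le, one_div, inv_mul_cancel₀ hκ.ne', Real.rpow_one]
  simp only [Real.rpow_one]

lemma subbotin_integrableOn' {κ : ℝ} (hκ : 0 < κ) {b : ℝ} (hb : 0 < b) {a : ℝ} (ha : 0 ≤ a) :
    IntegrableOn (fun x : ℝ => Real.exp (-(x ^ κ) / b)) (Set.Ioi a) := by
  have := (subbotin_integrableOn hκ (b := b⁻¹) (by positivity)).mono_set
    (Ioi_subset_Ioi ha)
  refine this.congr_fun (fun x _ => ?_) measurableSet_Ioi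
  ring_nf

-- lower bound
lemma subbotin_lower {κ : ℝ} (hκ : 0 < κ) {a : ℝ} (ha : 0 ≤ a) :
    Real.exp (-((a+1) ^ κ) / κ) ≤ ∫ x in Set.Ioi a, Real.exp (-(x ^ κ) / κ) := by
  have hint : IntegrableOn (fun x : ℝ => Real.exp (-(x ^ κ) / κ)) (Set.Ioi a) :=
    subbotin_integrableOn' hκ hκ ha
  have h1 : ∫ x in Set.Ioc a (a+1), Real.exp (-((a+1) ^ κ) / κ)
      ≤ ∫ x in Set.Ioc a (a+1), Real.exp (-(x ^ κ) / κ) := by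
    refine setIntegral_mono_on (integrableOn_const measure_Ioc_lt_top.ne)
      (hint.mono_set Ioc_subset_Ioi_self) measurableSet_Ioc (fun x hx => ?_)
    have hxa : a < x := hx.1
    have : x ^ κ ≤ (a+1) ^ κ :=
      Real.rpow_le_rpow (le_of_lt (lt_of_le_of_lt ha hxa)) hx.2 hκ.le
    have hdiv : -((a+1) ^ κ) / κ ≤ -(x ^ κ) / κ := by
      apply div_le_div_of_nonneg_right ?_ hκ.le
      · linarith
    exact Real.exp_le_exp.2 hdiv
  have h2 : ∫ x in Set.Ioc a (a+1), Real.exp (-(x ^ κ) / κ)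
      ≤ ∫ x in Set.Ioi a, Real.exp (-(x ^ κ) / κ) := by
    refine setIntegral_mono_set hint ?_ (HasSubset.Subset.eventuallyLE Ioc_subset_Ioi_self)
    filter_upwards with x using (Real.exp_pos _).le
  calc Real.exp (-((a+1) ^ κ) / κ)
      = ∫ x in Set.Ioc a (a+1), Real.exp (-((a+1) ^ κ) / κ) := by
        rw [setIntegral_const, Real.volume_real_Ioc_of_le (by linarith), smul_eq_mul]
        rw [show a + 1 - a = (1:ℝ) by ring, one_mul]
    _ ≤ _ := h1.trans h2

lemma subbotin_upper {κ a : ℝ} (hκ : 0 < κ) (ha : 0 < a) :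
    ∫ x in Set.Ioi a, Real.exp (-(x ^ κ) / κ)
      ≤ ((2:ℝ)^((1:ℝ)/κ) * a - a + ∫ x in Set.Ioi (0:ℝ), Real.exp (-(x ^ κ) / (2*κ)))
          * Real.exp (-(a ^ κ) / κ) := by
  set b : ℝ := (2:ℝ)^((1:ℝ)/κ) * a with hb
  have h2κ : (1:ℝ) ≤ (2:ℝ)^((1:ℝ)/κ) :=
    Real.one_le_rpow one_le_two (by positivity)
  have hab : a ≤ b := by
    calc a = 1 * a := (one_mul a).symm
    _ ≤ b := by rw [hb]; exact mul_le_mul_of_nonneg_right h2κ ha.le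
  have hb0 : 0 < b := lt_of_lt_of_le ha hab
  have hbκ : b ^ κ = 2 * a ^ κ := by
    rw [hb, Real.mul_rpow (by positivity) ha.le, ← Real.rpow_mul (by norm_num),
      one_div, inv_mul_cancel₀ hκ.ne', Real.rpow_one]
  have hint : IntegrableOn (fun x : ℝ => Real.exp (-(x ^ κ) / κ)) (Set.Ioi a) :=
    subbotin_integrableOn' hκ hκ ha.le
  have hint2 : IntegrableOn (fun x : ℝ => Real.exp (-(x ^ κ) / (2*κ))) (Set.Ioi (0:ℝ)) :=
    subbotin_integrableOn' hκ (by positivity) le_rfl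
  have hsplit : ∫ x in Set.Ioi a, Real.exp (-(x ^ κ) / κ)
      = (∫ x in Set.Ioc a b, Real.exp (-(x ^ κ) / κ))
        + ∫ x in Set.Ioi b, Real.exp (-(x ^ κ) / κ) := by
    rw [← setIntegral_union (Set.Ioc_disjoint_Ioi le_rfl) measurableSet_Ioi
      (hint.mono_set Set.Ioc_subset_Ioi_self)
      (hint.mono_set (Set.Ioi_subset_Ioi hab)), Set.Ioc_union_Ioi_eq_Ioi hab]
  have hfirst : ∫ x in Set.Ioc a b, Real.exp (-(x ^ κ) / κ)
      ≤ (b - a) * Real.exp (-(a ^ κ) / κ) := by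
    have : ∫ x in Set.Ioc a b, Real.exp (-(x ^ κ) / κ)
        ≤ ∫ _x in Set.Ioc a b, Real.exp (-(a ^ κ) / κ) := by
      refine setIntegral_mono_on (hint.mono_set Set.Ioc_subset_Ioi_self)
        (integrableOn_const measure_Ioc_lt_top.ne) measurableSet_Ioc (fun x hx => ?_)
      have : a ^ κ ≤ x ^ κ := Real.rpow_le_rpow ha.le hx.1.le hκ.le
      exact Real.exp_le_exp.2 (div_le_div_of_nonneg_right (by linarith) hκ.le)
    refine this.trans ?_
    rw [setIntegral_const, Real.volume_real_Ioc_of_le hab, smul_eq_mul]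
  have hsecond : ∫ x in Set.Ioi b, Real.exp (-(x ^ κ) / κ)
      ≤ (∫ x in Set.Ioi (0:ℝ), Real.exp (-(x ^ κ) / (2*κ))) * Real.exp (-(a ^ κ) / κ) := by
    have hpt : ∀ x ∈ Set.Ioi b, Real.exp (-(x ^ κ) / κ)
        ≤ Real.exp (-(a ^ κ) / κ) * Real.exp (-(x ^ κ) / (2*κ)) := by
      intro x hx
      have hbx : b ^ κ ≤ x ^ κ := Real.rpow_le_rpow hb0.le (le_of_lt hx) hκ.le
      rw [← Real.exp_add, Real.exp_le_exp]
      have : -(x ^ κ) / κ = -(x ^ κ) / (2*κ) + -(x ^ κ) / (2*κ) := by ring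
      rw [this]
      have : -(x ^ κ) / (2*κ) ≤ -(a ^ κ) / κ := by
        rw [show -(a ^ κ) / κ = -(2 * a ^ κ) / (2*κ) by ring, ← hbκ]
        exact div_le_div_of_nonneg_right (by linarith) (by positivity)
      linarith
    have h1 : ∫ x in Set.Ioi b, Real.exp (-(x ^ κ) / κ)
        ≤ ∫ x in Set.Ioi b, Real.exp (-(a ^ κ) / κ) * Real.exp (-(x ^ κ) / (2*κ)) := by
      refine setIntegral_mono_on (hint.mono_set (Set.Ioi_subset_Ioi hab))
        ((hint2.mono_set (Set.Ioi_subset_Ioi hb0.le)).const_mul _) measurableSet_Ioi hpt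
    have h2 : ∫ x in Set.Ioi b, Real.exp (-(a ^ κ) / κ) * Real.exp (-(x ^ κ) / (2*κ))
        ≤ ∫ x in Set.Ioi (0:ℝ), Real.exp (-(a ^ κ) / κ) * Real.exp (-(x ^ κ) / (2*κ)) := by
      refine setIntegral_mono_set (hint2.const_mul _) ?_
        (HasSubset.Subset.eventuallyLE (Set.Ioi_subset_Ioi hb0.le))
      filter_upwards with x using by positivity
    refine (h1.trans h2).trans_eq ?_
    rw [integral_const_mul]
    ring
  calc ∫ x in Set.Ioi a, Real.exp (-(x ^ κ) / κ) = _ := hsplit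
    _ ≤ (b - a) * Real.exp (-(a ^ κ) / κ)
        + (∫ x in Set.Ioi (0:ℝ), Real.exp (-(x ^ κ) / (2*κ))) * Real.exp (-(a ^ κ) / κ) :=
        add_le_add hfirst hsecond
    _ = _ := by rw [hb]; ring

lemma log_nat_tendsto : Tendsto (fun n : ℕ => Real.log n) atTop atTop :=
  Real.tendsto_log_atTop.comp tendsto_natCast_atTop_atTop

lemma exponent_limit {κ r : ℝ} (hκ : 0 < κ) (hr0 : 0 < r)
    {μ : ℕ → ℝ} (hμ : ∀ n : ℕ, μ n = (κ * r * Real.log n) ^ (1 / κ)) (d : ℝ) :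
    Tendsto (fun n : ℕ => ((μ n + d) ^ κ) / Real.log n) atTop (nhds (κ * r)) := by
  have hs : Tendsto (fun n : ℕ => κ * r * Real.log n) atTop atTop :=
    (log_nat_tendsto).const_mul_atTop (by positivity)
  have hμtop : Tendsto μ atTop atTop := by
    have := (tendsto_rpow_atTop (show (0:ℝ) < 1/κ by positivity)).comp hs
    refine this.congr fun n => (hμ n).symm
  have hdμ : Tendsto (fun n => d / μ n) atTop (nhds 0) :=
    Tendsto.div_atTop tendsto_const_nhds hμtop
  have hratio : Tendsto (fun n => ((μ n + d) / μ n) ^ κ) atTop (nhds 1) := by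
    have h1 : Tendsto (fun n => 1 + d / μ n) atTop (nhds 1) := by
      simpa using tendsto_const_nhds.add hdμ
    have h2 : Tendsto (fun n => (1 + d / μ n) ^ κ) atTop (nhds ((1:ℝ) ^ κ)) :=
      h1.rpow_const (Or.inl one_ne_zero)
    rw [Real.one_rpow] at h2
    refine h2.congr' ?_
    filter_upwards [hμtop.eventually_gt_atTop 0] with n hn
    field_simp
  have key := hratio.mul_const (κ * r)
  rw [one_mul] at key
  refine key.congr' ?_
  filter_upwards [hμtop.eventually_gt_atTop (|d| + 1),
    log_nat_tendsto.eventually_gt_atTop 0] with n hn hLn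
  have hμn : 0 < μ n := lt_of_le_of_lt (by positivity) hn
  have hμd : 0 ≤ μ n + d := by
    have := abs_le.1 (le_refl |d|) |>.1
    nlinarith [abs_nonneg d, neg_abs_le d]
  have hμκ : μ n ^ κ = κ * r * Real.log n := by
    rw [hμ n, ← Real.rpow_mul (by positivity), one_div, inv_mul_cancel₀ hκ.ne', Real.rpow_one]
  rw [Real.div_rpow hμd hμn.le, hμκ]
  field_simp

lemma loglog_limit {κ r : ℝ} (hκ : 0 < κ) (hr0 : 0 < r) :
    Tendsto (fun n : ℕ => Real.log (κ * r * Real.log n) / Real.log n) atTop (nhds 0) := by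
  have h0 : Tendsto (fun y : ℝ => Real.log y / y) atTop (nhds 0) :=
    Real.isLittleO_log_id_atTop.tendsto_div_nhds_zero
  have hs : Tendsto (fun n : ℕ => κ * r * Real.log n) atTop atTop :=
    (log_nat_tendsto).const_mul_atTop (by positivity)
  have h1 := (h0.comp hs).const_mul (κ * r)
  rw [mul_zero] at h1
  refine h1.congr' ?_
  filter_upwards [log_nat_tendsto.eventually_gt_atTop 0] with n hLn
  simp only [Function.comp]
  field_simp

lemma mu_tendsto {κ r : ℝ} (hκ : 0 < κ) (hr0 : 0 < r)
    {μ : ℕ → ℝ} (hμ : ∀ n : ℕ, μ n = (κ * r * Real.log n) ^ (1 / κ)) :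
    Tendsto μ atTop atTop := by
  have hs : Tendsto (fun n : ℕ => κ * r * Real.log n) atTop atTop :=
    (log_nat_tendsto).const_mul_atTop (by positivity)
  exact ((tendsto_rpow_atTop (show (0:ℝ) < 1/κ by positivity)).comp hs).congr
    fun n => (hμ n).symm



/-- Under the generalized Gaussian (Subbotin) shift `μ_n = (κ r log n)^{1/κ}` with `κ > 0`
and `r ∈ (0,1)`, the upper-tail mass `Φ̄(a) = ∫_a^∞ exp(-x^κ/κ) dx` satisfies
`log Φ̄(μ_n + c) / log n → -r` for every fixed `c`.  In the shift-location testing model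
this says that every fixed quantile `G⁻¹(q)` of the p-value distribution under the
alternative satisfies `log G⁻¹(q) ~ -r log n`. -/
theorem quantile_scaling_under_subbotin_shift
    (κ r : ℝ) (hκ : 0 < κ) (hr : r ∈ Set.Ioo (0 : ℝ) 1)
    (μ : ℕ → ℝ) (hμ : ∀ n : ℕ, μ n = (κ * r * Real.log n) ^ (1 / κ))
    (Φbar : ℝ → ℝ) (hΦbar : ∀ a : ℝ, Φbar a = ∫ x in Set.Ioi a, Real.exp (-(x ^ κ) / κ))
    (c : ℝ) :
    Filter.Tendsto (fun n : ℕ => Real.log (Φbar (μ n + c)) / Real.log n)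
      Filter.atTop (nhds (-r)) := by
  obtain ⟨hr0, hr1⟩ := hr
  set I : ℝ := ∫ x in Set.Ioi (0:ℝ), Real.exp (-(x ^ κ) / (2*κ)) with hI
  have hInn : 0 ≤ I :=
    setIntegral_nonneg measurableSet_Ioi (fun x _ => (Real.exp_pos _).le)
  set C : ℕ → ℝ := fun n => (2:ℝ)^((1:ℝ)/κ) * (μ n + c) - (μ n + c) + I with hC
  have h2κ : (1:ℝ) < (2:ℝ)^((1:ℝ)/κ) := by
    rw [Real.one_lt_rpow_iff_of_pos (by norm_num)]
    exact Or.inl ⟨one_lt_two, by positivity⟩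
  have hμtop := mu_tendsto hκ hr0 hμ
  have hcp : Tendsto (fun n => μ n + c) atTop atTop :=
    tendsto_atTop_add_const_right _ c hμtop
  have hCtop : Tendsto C atTop atTop := by
    have h := tendsto_atTop_add_const_right atTop I
      (hcp.const_mul_atTop (show (0:ℝ) < (2:ℝ)^((1:ℝ)/κ) - 1 by linarith))
    exact h.congr fun n => by rw [hC]; ring
  have hC1 : ∀ᶠ n in atTop, (1:ℝ) ≤ C n := hCtop.eventually_ge_atTop 1
  -- log C n / log n → 0
  have hlogC : Tendsto (fun n : ℕ => Real.log (C n) / Real.log n) atTop (nhds 0) := by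
    set K : ℝ := 2 * (2:ℝ)^((1:ℝ)/κ) with hK
    have hKpos : 0 < K := by positivity
    have hup : Tendsto (fun n : ℕ => Real.log K / Real.log n
        + (1/κ) * (Real.log (κ * r * Real.log n) / Real.log n)) atTop (nhds 0) := by
      have h1 : Tendsto (fun n : ℕ => Real.log K / Real.log n) atTop (nhds 0) :=
        Tendsto.div_atTop tendsto_const_nhds log_nat_tendsto
      have h2 := (loglog_limit hκ hr0).const_mul (1/κ)
      rw [mul_zero] at h2
      simpa using h1.add h2
    refine tendsto_of_tendsto_of_tendsto_of_le_of_le' tendsto_const_nhds hup ?_ ?_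
    · filter_upwards [hC1, log_nat_tendsto.eventually_gt_atTop 0] with n h1 hL
      exact div_nonneg (Real.log_nonneg h1) hL.le
    · filter_upwards [hC1, log_nat_tendsto.eventually_gt_atTop 0,
        hμtop.eventually_ge_atTop (|c| + I + 1)] with n h1 hL hn
      have hμpos : 0 < μ n := lt_of_lt_of_le (by positivity) hn
      have hclec : c ≤ |c| := le_abs_self c
      have hCK : C n ≤ K * μ n := by
        rw [hC, hK]
        nlinarith [neg_abs_le c, abs_nonneg c]
      have hlog1 : Real.log (C n) ≤ Real.log (K * μ n) :=
        Real.log_le_log (by linarith) hCK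
      have hlog2 : Real.log (K * μ n) = Real.log K + (1/κ) * Real.log (κ * r * Real.log n) := by
        rw [Real.log_mul hKpos.ne' hμpos.ne', hμ n,
          Real.log_rpow (by positivity)]
      calc Real.log (C n) / Real.log n ≤ Real.log (K * μ n) / Real.log n :=
            div_le_div_of_nonneg_right hlog1 hL.le
        _ = _ := by rw [hlog2]; ring
  -- the two bounding sequences
  have hlo : Tendsto (fun n : ℕ => -((((μ n + (c+1)) ^ κ) / Real.log n) / κ))
      atTop (nhds (-r)) := by
    have := ((exponent_limit hκ hr0 hμ (c+1)).div_const κ).neg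
    rwa [show κ * r / κ = r by field_simp] at this
  have hhi : Tendsto (fun n : ℕ => Real.log (C n) / Real.log n
      - (((μ n + c) ^ κ) / Real.log n) / κ) atTop (nhds (-r)) := by
    have := hlogC.sub ((exponent_limit hκ hr0 hμ c).div_const κ)
    rwa [show κ * r / κ = r by field_simp, zero_sub] at this
  refine tendsto_of_tendsto_of_tendsto_of_le_of_le' hlo hhi ?_ ?_
  · filter_upwards [hcp.eventually_ge_atTop 1, log_nat_tendsto.eventually_gt_atTop 0]
      with n h1 hL
    have ha : (0:ℝ) < μ n + c := by linarith
    have hlow : Real.exp (-((μ n + c + 1) ^ κ) / κ) ≤ Φbar (μ n + c) := by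
      rw [hΦbar]; exact subbotin_lower hκ ha.le
    have hΦpos : 0 < Φbar (μ n + c) := lt_of_lt_of_le (Real.exp_pos _) hlow
    have hlog : -((μ n + c + 1) ^ κ) / κ ≤ Real.log (Φbar (μ n + c)) :=
      (Real.le_log_iff_exp_le hΦpos).2 hlow
    have heq : μ n + (c + 1) = μ n + c + 1 := by ring
    calc -((((μ n + (c+1)) ^ κ) / Real.log n) / κ)
        = (-((μ n + c + 1) ^ κ) / κ) / Real.log n := by rw [heq]; ring
      _ ≤ Real.log (Φbar (μ n + c)) / Real.log n :=
          div_le_div_of_nonneg_right hlog hL.le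
  · filter_upwards [hcp.eventually_ge_atTop 1, log_nat_tendsto.eventually_gt_atTop 0, hC1]
      with n h1 hL hCn
    have ha : (0:ℝ) < μ n + c := by linarith
    have hlow : Real.exp (-((μ n + c + 1) ^ κ) / κ) ≤ Φbar (μ n + c) := by
      rw [hΦbar]; exact subbotin_lower hκ ha.le
    have hΦpos : 0 < Φbar (μ n + c) := lt_of_lt_of_le (Real.exp_pos _) hlow
    have hupb : Φbar (μ n + c) ≤ C n * Real.exp (-((μ n + c) ^ κ) / κ) := by
      rw [hΦbar, hC]; exact subbotin_upper hκ ha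
    have hlog : Real.log (Φbar (μ n + c))
        ≤ Real.log (C n) + -((μ n + c) ^ κ) / κ := by
      have := Real.log_le_log hΦpos hupb
      rwa [Real.log_mul (by linarith) (Real.exp_ne_zero _), Real.log_exp] at this
    calc Real.log (Φbar (μ n + c)) / Real.log n
        ≤ (Real.log (C n) + -((μ n + c) ^ κ) / κ) / Real.log n :=
          div_le_div_of_nonneg_right hlog hL.le
      _ = _ := by ring
end

section
/- Let n ≥ 2 independent p-values P_1,…,P_n be given, where each p-value of a true null hypothesis is Uniform(0,1)-distributed, let λ = n^{-1}·#{i : the i-th null hypothesis is false}, and let α ∈ (0,1). Define the familywise-error-rate estimate λ̂ = F_n(α/n) = n^{-1} Σ_{i=1}^n 1{P_i ≤ α/n}. Then P(λ̂ > λ) < α. -/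
open MeasureTheory ProbabilityTheory Filter Set

/-- Empirical distribution function of the first `n` of the random variables `P`, at `t`. -/
noncomputable def empCDF {Ω : Type*} (n : ℕ) (P : ℕ → Ω → ℝ) (t : ℝ) (ω : Ω) : ℝ :=
  (∑ i ∈ Finset.range n, if P i ω ≤ t then (1 : ℝ) else 0) / n

/-- `V_{n,δ} = sup_{t ∈ (0,1)} (U_n(t) - t)/δ(t)`. -/
noncomputable def Vstat {Ω : Type*} (n : ℕ) (δ : ℝ → ℝ) (U : ℕ → Ω → ℝ) (ω : Ω) : ℝ :=
  ⨆ t : Set.Ioo (0 : ℝ) 1, (empCDF n U (t : ℝ) ω - (t : ℝ)) / δ (t : ℝ)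

/-- The estimator `λ̂ = sup_{t ∈ (0,1)} (F_n(t) - t - β δ(t))/(1 - t)`. -/
noncomputable def lamHat {Ω : Type*} (n : ℕ) (P : ℕ → Ω → ℝ) (δ : ℝ → ℝ) (b : ℝ) (ω : Ω) : ℝ :=
  ⨆ t : Set.Ioo (0 : ℝ) 1, (empCDF n P (t : ℝ) ω - (t : ℝ) - b * δ (t : ℝ)) / (1 - (t : ℝ))

/-- The familywise-error-rate estimate `λ̂ = F_n(α/n)` satisfies `P(λ̂ > λ) < α`. -/
theorem fwer_estimate_is_valid_lower_bound
    {Ω : Type*} [MeasureSpace Ω] [IsProbabilityMeasure (ℙ : Measure Ω)]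
    (n : ℕ) (hn : 2 ≤ n) (α : ℝ) (hα : α ∈ Set.Ioo (0 : ℝ) 1)
    -- the `n` independent p-values
    (P : ℕ → Ω → ℝ) (hPmeas : ∀ i, Measurable (P i))
    (hPindep : iIndepFun (fun i : Fin n => P i) ℙ)
    -- the false null hypotheses; p-values of true nulls are Uniform(0,1)
    (falseNull : Finset ℕ) (hfn : falseNull ⊆ Finset.range n)
    (hnull : ∀ i < n, i ∉ falseNull →
      Measure.map (P i) ℙ = volume.restrict (Set.Icc (0 : ℝ) 1))
    -- the proportion of false null hypotheses
    (lam : ℝ) (hlam : lam = (falseNull.card : ℝ) / n) :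
    ℙ {ω : Ω | lam < empCDF n P (α / n) ω} < ENNReal.ofReal α := by
  have hn0 : (0:ℝ) < n := by positivity
  set t : ℝ := α / n with ht
  have ht0 : 0 < t := div_pos hα.1 hn0
  have ht1 : t < 1 := by
    rw [ht, div_lt_one hn0]
    calc α < 1 := hα.2
    _ ≤ n := by exact_mod_cast Nat.one_le_of_lt hn
  have htn : (n : ℝ) * t = α := by
    rw [ht]; field_simp
  -- measure of each event for a true null
  have hA : ∀ i < n, i ∉ falseNull → ℙ (P i ⁻¹' Set.Iic t) = ENNReal.ofReal t := by
    intro i hi hi'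
    have h1 : ℙ (P i ⁻¹' Set.Iic t) = Measure.map (P i) ℙ (Set.Iic t) :=
      (Measure.map_apply (hPmeas i) measurableSet_Iic).symm
    rw [h1, hnull i hi hi', Measure.restrict_apply measurableSet_Iic]
    have hset : Set.Iic t ∩ Set.Icc (0:ℝ) 1 = Set.Icc 0 t := by
      ext x
      simp only [Set.mem_inter_iff, Set.mem_Iic, Set.mem_Icc]
      constructor
      · rintro ⟨h1, h2, h3⟩; exact ⟨h2, h1⟩
      · rintro ⟨h1, h2⟩; exact ⟨h2, h1, le_trans h2 ht1.le⟩
    rw [hset, Real.volume_Icc, sub_zero]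
  -- inclusion into the union over true nulls
  set T : Finset ℕ := Finset.range n \ falseNull with hT
  have hsub : {ω : Ω | lam < empCDF n P t ω} ⊆ ⋃ i ∈ T, P i ⁻¹' Set.Iic t := by
    intro ω hω
    by_contra h
    simp only [Set.mem_iUnion, Set.mem_preimage, Set.mem_Iic, not_exists] at h
    have hzero : ∀ i ∈ T, (if P i ω ≤ t then (1:ℝ) else 0) = 0 := by
      intro i hi
      simp [h i hi]
    have hsum : (∑ i ∈ Finset.range n, if P i ω ≤ t then (1 : ℝ) else 0)
        ≤ falseNull.card := by
      rw [← Finset.sum_sdiff hfn, Finset.sum_eq_zero hzero, zero_add]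
      calc (∑ i ∈ falseNull, if P i ω ≤ t then (1 : ℝ) else 0)
          ≤ ∑ i ∈ falseNull, 1 := Finset.sum_le_sum (by intro i _; split <;> norm_num)
        _ = falseNull.card := by simp
    have hle : empCDF n P t ω ≤ lam := by
      rw [hlam, empCDF]
      gcongr
    exact absurd hω (not_lt.mpr hle)
  have hTmem : ∀ i ∈ T, i < n ∧ i ∉ falseNull := by
    intro i hi
    rw [hT, Finset.mem_sdiff, Finset.mem_range] at hi
    exact hi
  have hsumT : ∀ S : Finset ℕ, S ⊆ T →
      ∑ i ∈ S, ℙ (P i ⁻¹' Set.Iic t) = S.card • ENNReal.ofReal t := by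
    intro S hS
    rw [Finset.sum_congr rfl (fun i hi => hA i (hTmem i (hS hi)).1 (hTmem i (hS hi)).2),
      Finset.sum_const]
  rcases falseNull.eq_empty_or_nonempty with hfe | hfne
  · -- all nulls are true: use independence of `P 0` and `P 1`
    have hT' : T = Finset.range n := by rw [hT, hfe, Finset.sdiff_empty]
    have h01 : (⟨0, by omega⟩ : Fin n) ≠ ⟨1, by omega⟩ := by
      simp [Fin.ext_iff]
    have hindep2 : IndepFun (P 0) (P 1) ℙ := hPindep.indepFun h01
    have h0T : (0 : ℕ) ∈ T := by rw [hT']; simp; omega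
    have h1T : (1 : ℕ) ∈ T := by rw [hT']; simp; omega
    have hAB : ℙ (P 0 ⁻¹' Set.Iic t ∩ P 1 ⁻¹' Set.Iic t)
        = ENNReal.ofReal t * ENNReal.ofReal t := by
      rw [hindep2.measure_inter_preimage_eq_mul _ _ measurableSet_Iic measurableSet_Iic,
        hA 0 (hTmem 0 h0T).1 (hTmem 0 h0T).2, hA 1 (hTmem 1 h1T).1 (hTmem 1 h1T).2]
    set R : Finset ℕ := Finset.range n \ {0, 1} with hR
    have hunion : (⋃ i ∈ T, P i ⁻¹' Set.Iic t)
        ⊆ (P 0 ⁻¹' Set.Iic t ∪ P 1 ⁻¹' Set.Iic t) ∪ ⋃ i ∈ R, P i ⁻¹' Set.Iic t := by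
      intro x hx
      simp only [Set.mem_iUnion, exists_prop] at hx
      obtain ⟨i, hiT, hxi⟩ := hx
      by_cases hi0 : i = 0
      · exact Or.inl (Or.inl (hi0 ▸ hxi))
      by_cases hi1 : i = 1
      · exact Or.inl (Or.inr (hi1 ▸ hxi))
      · refine Or.inr ?_
        simp only [Set.mem_iUnion, exists_prop]
        refine ⟨i, ?_, hxi⟩
        rw [hR, Finset.mem_sdiff]
        refine ⟨by rw [hT'] at hiT; exact hiT, by simp [hi0, hi1]⟩
    have hRsub : R ⊆ T := by
      rw [hT', hR]; exact Finset.sdiff_subset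
    have hRcard : R.card = n - 2 := by
      rw [hR, Finset.card_sdiff_of_subset (by intro i hi; fin_cases hi <;> simp <;> omega)]
      simp
    have hkey : ℙ {ω : Ω | lam < empCDF n P t ω} + ENNReal.ofReal t * ENNReal.ofReal t
        ≤ ENNReal.ofReal α := by
      calc ℙ {ω : Ω | lam < empCDF n P t ω} + ENNReal.ofReal t * ENNReal.ofReal t
          ≤ ℙ ((P 0 ⁻¹' Set.Iic t ∪ P 1 ⁻¹' Set.Iic t) ∪ ⋃ i ∈ R, P i ⁻¹' Set.Iic t)
            + ℙ (P 0 ⁻¹' Set.Iic t ∩ P 1 ⁻¹' Set.Iic t) := by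
            rw [hAB]
            exact add_le_add ((measure_mono hsub).trans (measure_mono hunion)) le_rfl
        _ ≤ (ℙ (P 0 ⁻¹' Set.Iic t ∪ P 1 ⁻¹' Set.Iic t)
              + ℙ (⋃ i ∈ R, P i ⁻¹' Set.Iic t))
            + ℙ (P 0 ⁻¹' Set.Iic t ∩ P 1 ⁻¹' Set.Iic t) :=
            add_le_add (measure_union_le _ _) le_rfl
        _ = (ℙ (P 0 ⁻¹' Set.Iic t ∪ P 1 ⁻¹' Set.Iic t)
              + ℙ (P 0 ⁻¹' Set.Iic t ∩ P 1 ⁻¹' Set.Iic t))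
            + ℙ (⋃ i ∈ R, P i ⁻¹' Set.Iic t) := by ring
        _ = (ℙ (P 0 ⁻¹' Set.Iic t) + ℙ (P 1 ⁻¹' Set.Iic t))
            + ℙ (⋃ i ∈ R, P i ⁻¹' Set.Iic t) := by
            rw [measure_union_add_inter _ ((hPmeas 1) measurableSet_Iic)]
        _ ≤ (ENNReal.ofReal t + ENNReal.ofReal t) + (n - 2) • ENNReal.ofReal t := by
            rw [hA 0 (hTmem 0 h0T).1 (hTmem 0 h0T).2, hA 1 (hTmem 1 h1T).1 (hTmem 1 h1T).2]
            refine add_le_add le_rfl ?_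
            calc ℙ (⋃ i ∈ R, P i ⁻¹' Set.Iic t) ≤ ∑ i ∈ R, ℙ (P i ⁻¹' Set.Iic t) :=
                measure_biUnion_finset_le R _
              _ = (n - 2) • ENNReal.ofReal t := by rw [hsumT R hRsub, hRcard]
        _ = n • ENNReal.ofReal t := by
            rw [← two_nsmul, ← add_nsmul]
            congr 1
            omega
        _ = ENNReal.ofReal α := by
            rw [nsmul_eq_mul, ← htn, ENNReal.ofReal_mul (by positivity),
              ENNReal.ofReal_natCast]
    calc ℙ {ω : Ω | lam < empCDF n P t ω}
        < ℙ {ω : Ω | lam < empCDF n P t ω} + ENNReal.ofReal t * ENNReal.ofReal t :=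
          ENNReal.lt_add_right (measure_ne_top _ _)
            (mul_ne_zero (by simp [ENNReal.ofReal_eq_zero, not_le]; exact ht0)
              (by simp [ENNReal.ofReal_eq_zero, not_le]; exact ht0))
      _ ≤ ENNReal.ofReal α := hkey
  · -- at least one false null: union bound over at most `n - 1` events
    have hTcard : T.card ≤ n - 1 := by
      rw [hT, Finset.card_sdiff_of_subset hfn, Finset.card_range]
      have := Finset.card_pos.mpr hfne
      omega
    calc ℙ {ω : Ω | lam < empCDF n P t ω}
        ≤ ℙ (⋃ i ∈ T, P i ⁻¹' Set.Iic t) := measure_mono hsub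
      _ ≤ ∑ i ∈ T, ℙ (P i ⁻¹' Set.Iic t) := measure_biUnion_finset_le T _
      _ = T.card • ENNReal.ofReal t := hsumT T Finset.Subset.rfl
      _ = ENNReal.ofReal (T.card * t) := by
          rw [nsmul_eq_mul, ← ENNReal.ofReal_natCast T.card,
            ← ENNReal.ofReal_mul (by positivity)]
      _ < ENNReal.ofReal α := by
          rw [ENNReal.ofReal_lt_ofReal_iff hα.1, ← htn]
          have hlt : (T.card : ℝ) < n := by
            have : T.card < n := by omega
            exact_mod_cast this
          exact mul_lt_mul_of_pos_right hlt ht0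
end

section
/- Let δ be a bounding function, let λ ∈ [0,1] with n₀ = (1−λ)n a positive integer, and let β_{n,α} be a sequence such that n·β_{n,α} is monotonically increasing in n. Consider n independent p-values of which n₀ are Uniform(0,1)-distributed (the true nulls) and the remaining nλ have arbitrary distributions on [0,1], with empirical distribution F_n. Then F_n(t) ≤ λ + (1−λ) U_{n₀}(t) for all t, where U_{n₀} is the empirical distribution of the n₀ uniform p-values, and consequently P( sup_{t∈(0,1)} (F_n(t) − t − β_{n,α} δ(t))/(1−t) > λ ) ≤ P( sup_{t∈(0,1)} ( U_{n₀}(t) − t − (n/n₀) β_{n,α} δ(t) ) > 0 ). -/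
open MeasureTheory ProbabilityTheory Filter Set

/-- Empirical distribution function of the p-values with indices in the finite set `s`. -/
noncomputable def empCDFOn {Ω : Type*} (s : Finset ℕ) (P : ℕ → Ω → ℝ) (t : ℝ) (ω : Ω) : ℝ :=
  (∑ i ∈ s, if P i ω ≤ t then (1 : ℝ) else 0) / s.card

/-- Key reduction step in the proof of Theorem 1: `F_n(t) ≤ λ + (1-λ)U_{n₀}(t)` for all
`t`, where `U_{n₀}` is the empirical distribution of the `n₀` uniform p-values of the
true null hypotheses, and consequently
`P( sup_{t∈(0,1)} (F_n(t) - t - β_{n,α}δ(t))/(1-t) > λ )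
  ≤ P( sup_{t∈(0,1)} ( U_{n₀}(t) - t - (n/n₀)β_{n,α}δ(t) ) > 0 )`. -/
theorem reduction_to_uniform_empirical_process
    {Ω : Type*} [MeasureSpace Ω] [IsProbabilityMeasure (ℙ : Measure Ω)]
    (n n₀ : ℕ) (hn₀pos : 0 < n₀)
    -- the bounding function
    (δ : ℝ → ℝ) (hδpos : ∀ t ∈ Set.Ioo (0 : ℝ) 1, 0 < δ t)
    -- the proportion of false null hypotheses, with `n₀ = (1-λ)n` a positive integer
    (lam : ℝ) (hlam : lam ∈ Set.Icc (0 : ℝ) 1) (hn₀ : (n₀ : ℝ) = (1 - lam) * n)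
    -- `n·β_n` is monotonically increasing
    (β : ℕ → ℝ) (hβmono : Monotone fun m : ℕ => (m : ℝ) * β m)
    -- the `n` independent p-values, taking values in `[0,1]`
    (P : ℕ → Ω → ℝ) (hPmeas : ∀ i, Measurable (P i))
    (hPindep : iIndepFun (fun i : Fin n => P i) ℙ)
    (hPrange : ∀ i < n, ∀ ω : Ω, P i ω ∈ Set.Icc (0 : ℝ) 1)
    -- the true null hypotheses, whose p-values are Uniform(0,1)
    (trueNull : Finset ℕ) (htn : trueNull ⊆ Finset.range n) (hcard : trueNull.card = n₀)
    (hunif : ∀ i ∈ trueNull,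
      Measure.map (P i) ℙ = volume.restrict (Set.Icc (0 : ℝ) 1)) :
    (∀ t : ℝ, ∀ ω : Ω,
      empCDF n P t ω ≤ lam + (1 - lam) * empCDFOn trueNull P t ω) ∧
    ℙ {ω : Ω |
        lam < ⨆ t : Set.Ioo (0 : ℝ) 1,
          (empCDF n P (t : ℝ) ω - (t : ℝ) - β n * δ (t : ℝ)) / (1 - (t : ℝ))}
      ≤ ℙ {ω : Ω |
        0 < ⨆ t : Set.Ioo (0 : ℝ) 1,
          (empCDFOn trueNull P (t : ℝ) ω - (t : ℝ)
            - ((n : ℝ) / (n₀ : ℝ)) * β n * δ (t : ℝ))} := by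

  -- basic positivity facts
  have hn₀len : n₀ ≤ n := by
    have := Finset.card_le_card htn
    simpa [hcard, Finset.card_range] using this
  have hnpos : 0 < n := lt_of_lt_of_le hn₀pos hn₀len
  have hnR : (0:ℝ) < n := by exact_mod_cast hnpos
  have hn₀R : (0:ℝ) < n₀ := by exact_mod_cast hn₀pos
  have hβn : 0 ≤ β n := by
    have h0 : (0:ℝ) * β 0 ≤ (n:ℝ) * β n := by simpa using hβmono (Nat.zero_le n)
    nlinarith
  have h1lam : 1 - lam = (n₀:ℝ) / n := by
    rw [eq_div_iff hnR.ne']; linarith [hn₀]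
  have hlamn : lam * n = (n:ℝ) - n₀ := by nlinarith [hn₀]
  have hlam0 : 0 ≤ lam := hlam.1
  -- sums of indicators
  have hsum_le : ∀ (s : Finset ℕ) (t : ℝ) (ω : Ω),
      (∑ i ∈ s, if P i ω ≤ t then (1:ℝ) else 0) ≤ s.card := by
    intro s t ω
    calc (∑ i ∈ s, if P i ω ≤ t then (1:ℝ) else 0) ≤ ∑ i ∈ s, 1 :=
          Finset.sum_le_sum (fun i _ => by split <;> norm_num)
      _ = s.card := by simp
  have hsum_nonneg : ∀ (s : Finset ℕ) (t : ℝ) (ω : Ω),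
      0 ≤ (∑ i ∈ s, if P i ω ≤ t then (1:ℝ) else 0) := by
    intro s t ω
    exact Finset.sum_nonneg (fun i _ => by split <;> norm_num)
  have hFle : ∀ (t : ℝ) (ω : Ω), empCDF n P t ω ≤ 1 := by
    intro t ω
    unfold empCDF
    rw [div_le_one hnR]
    simpa using hsum_le (Finset.range n) t ω
  have hUle : ∀ (t : ℝ) (ω : Ω), empCDFOn trueNull P t ω ≤ 1 := by
    intro t ω
    unfold empCDFOn
    rw [div_le_one (by rw [hcard]; exact hn₀R)]
    simpa [hcard] using hsum_le trueNull t ω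
  -- the key pointwise inequality
  have key : ∀ t : ℝ, ∀ ω : Ω,
      empCDF n P t ω ≤ lam + (1 - lam) * empCDFOn trueNull P t ω := by
    intro t ω
    unfold empCDF empCDFOn
    rw [← Finset.sum_sdiff htn]
    set A := ∑ i ∈ trueNull, if P i ω ≤ t then (1:ℝ) else 0 with hA
    set B := ∑ i ∈ Finset.range n \ trueNull, if P i ω ≤ t then (1:ℝ) else 0 with hB
    have hBle : B ≤ (n:ℝ) - n₀ := by
      have h1 := hsum_le (Finset.range n \ trueNull) t ω
      have h2 : (Finset.range n \ trueNull).card = n - n₀ := by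
        rw [Finset.card_sdiff_of_subset htn, Finset.card_range, hcard]
      rw [h2] at h1
      have h3 : ((n - n₀ : ℕ) : ℝ) = (n:ℝ) - n₀ := by
        push_cast [Nat.cast_sub hn₀len]; ring
      linarith [h1, h3.le, h3.ge]
    have heq : (1 - lam) * (A / (trueNull.card : ℝ)) = A / n := by
      rw [hcard, h1lam]; field_simp
    rw [heq, div_le_iff₀ hnR, add_mul, div_mul_cancel₀ _ hnR.ne']
    linarith [hBle, hlamn]
  refine ⟨key, ?_⟩
  -- measure inequality via set inclusion
  haveI : Nonempty (Set.Ioo (0:ℝ) 1) := ⟨⟨1/2, by norm_num, by norm_num⟩⟩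
  apply measure_mono
  intro ω hω
  simp only [Set.mem_setOf_eq] at hω ⊢
  set f : Set.Ioo (0:ℝ) 1 → ℝ := fun t =>
    (empCDF n P (t:ℝ) ω - (t:ℝ) - β n * δ (t:ℝ)) / (1 - (t:ℝ)) with hf
  set g : Set.Ioo (0:ℝ) 1 → ℝ := fun t =>
    (empCDFOn trueNull P (t:ℝ) ω - (t:ℝ) - ((n:ℝ)/(n₀:ℝ)) * β n * δ (t:ℝ)) with hg
  have hfle : ∀ t : Set.Ioo (0:ℝ) 1, f t ≤ 1 := by
    intro t
    have h1t : 0 < 1 - (t:ℝ) := by linarith [t.2.2]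
    rw [hf]
    rw [div_le_one h1t]
    have hδt : 0 < δ (t:ℝ) := hδpos t t.2
    have := hFle (t:ℝ) ω
    nlinarith
  have hfbdd : BddAbove (Set.range f) := by
    refine ⟨1, ?_⟩
    rintro x ⟨t, rfl⟩
    exact hfle t
  have hgle : ∀ t : Set.Ioo (0:ℝ) 1, g t ≤ 1 := by
    intro t
    have hδt : 0 < δ (t:ℝ) := hδpos t t.2
    have hU := hUle (t:ℝ) ω
    have hc : 0 ≤ (n:ℝ)/(n₀:ℝ) * β n := mul_nonneg (by positivity) hβn
    have ht0 : (0:ℝ) < (t:ℝ) := t.2.1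
    rw [hg]
    nlinarith
  have hgbdd : BddAbove (Set.range g) := by
    refine ⟨1, ?_⟩
    rintro x ⟨t, rfl⟩
    exact hgle t
  obtain ⟨t, ht⟩ := (lt_ciSup_iff hfbdd).mp hω
  have h1t : 0 < 1 - (t:ℝ) := by linarith [t.2.2]
  rw [hf] at ht
  rw [lt_div_iff₀ h1t] at ht
  have hδt : 0 < δ (t:ℝ) := hδpos t t.2
  have hkey := key (t:ℝ) ω
  -- derive (1-lam)(U - t) > β δ
  have h2 : (1 - lam) * (empCDFOn trueNull P (t:ℝ) ω - (t:ℝ)) > β n * δ (t:ℝ) := by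
    nlinarith
  have h3 : 0 < g t := by
    rw [hg]
    have h1l : 1 - lam = (n₀:ℝ)/n := h1lam
    have hfrac : (0:ℝ) < (n₀:ℝ)/n := by positivity
    rw [h1l] at h2
    have h4 : empCDFOn trueNull P (t:ℝ) ω - (t:ℝ) > ((n:ℝ)/(n₀:ℝ)) * (β n * δ (t:ℝ)) := by
      have hc : (0:ℝ) < (n:ℝ)/(n₀:ℝ) := by positivity
      have hmul := mul_lt_mul_of_pos_left h2 hc
      have hid : (n:ℝ)/(n₀:ℝ) * ((n₀:ℝ)/(n:ℝ)
          * (empCDFOn trueNull P (t:ℝ) ω - (t:ℝ)))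
          = empCDFOn trueNull P (t:ℝ) ω - (t:ℝ) := by
        field_simp
      rw [hid] at hmul
      exact hmul
    nlinarith
  exact lt_of_lt_of_le h3 (le_trans (le_of_eq rfl) (le_ciSup hgbdd t))
end
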